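/- Let 0 < a < b ≤ 1, 0 < s < 1, and q ≥ 1. Then |A(a^s, b^s) − L(a^s, b^s)| ≤ (s / (2 G(a,b)^{2(s−1)²})) · ((b−a)/(2 L(a,b)))^{1−1/q} · (1/((s²−s+1)q))^{1/q} · [ ( b^{(s²−s+1)q} − L(a^{(s²−s+1)q}, b^{(s²−s+1)q}) )^{1/q} + ( L(a^{(s²−s+1)q}, b^{(s²−s+1)q}) − a^{(s²−s+1)q} )^{1/q} ]. -/

import Mathlib

open Real

/-- Arithmetic mean. -/
noncomputable def Amean (x y : ℝ) : ℝ := (x + y) / 2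

/-- Geometric mean. -/
noncomputable def Gmean (x y : ℝ) : ℝ := Real.sqrt (x * y)

/-- Logarithmic mean. -/
noncomputable def Lmean (x y : ℝ) : ℝ := (y - x) / (Real.log y - Real.log x)

/-!
Write `a = eˣ`, `b = eʸ` and `u(t) = x + (y - x) t`. Integrating by parts, the trapezoid error of
`exp` on `[s x, s y]` is `A - L = s (y - x) ∫₀¹ (t - 1/2) e^{s u(t)} dt`. Since
`s u = (s² - s + 1) u - (s - 1)² u` and `u ≥ x + y` (because `y ≤ 0`), we have
`e^{s u} ≤ G(a, b)^{-2(s-1)²} e^{(s² - s + 1) u}`. Hölder's inequality with weight `|t - 1/2|`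
(of mass `1/4` and at most `1/2`) then bounds the integral by
`(1/4)^{1-1/q} ((1/2) ∫₀¹ e^{m u})^{1/q}` with `m = (s² - s + 1) q`, and `∫₀¹ e^{m u} = L(aᵐ, bᵐ)`.
Finally `bᵐ - aᵐ = (bᵐ - L) + (L - aᵐ)` and `z ↦ z^{1/q}` is subadditive.
-/

open MeasureTheory Set intervalIntegral

theorem integral_mul_le_weight_mul_Lp_of_nonneg {α : Type*} [MeasurableSpace α] {μ : Measure α}
    {q : ℝ} (hq : 1 ≤ q) {w f : α → ℝ} (hw : 0 ≤ w) (hf : 0 ≤ f) (hw_int : Integrable w μ)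
    (hf_meas : AEStronglyMeasurable f μ) (hwf_int : Integrable (fun x ↦ w x * f x ^ q) μ) :
    ∫ x, w x * f x ∂μ ≤ (∫ x, w x ∂μ) ^ (1 - 1 / q) * (∫ x, w x * f x ^ q ∂μ) ^ (1 / q) := by
  obtain rfl | hq := hq.eq_or_lt
  · simp
  obtain ⟨p, hpq⟩ : ∃ p : ℝ, p.HolderConjugate q :=
    ⟨_, (Real.HolderConjugate.conjExponent hq).symm⟩
  have hp : 1 / p = 1 - 1 / q := by linarith [hpq.one_div_add_one_div]
  have hw_pow : ∀ x, (w x ^ (1 / p)) ^ p = w x := fun x ↦ by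
    rw [← rpow_mul (hw x), one_div_mul_cancel hpq.ne_zero, rpow_one]
  have hwf_pow : ∀ x, (w x ^ (1 / q) * f x) ^ q = w x * f x ^ q := fun x ↦ by
    rw [mul_rpow (rpow_nonneg (hw x) _) (hf x), ← rpow_mul (hw x),
      one_div_mul_cancel hpq.symm.ne_zero, rpow_one]
  have hsplit : ∀ x, w x * f x = w x ^ (1 / p) * (w x ^ (1 / q) * f x) := fun x ↦ by
    rw [← mul_assoc, ← rpow_add' (y := 1 / p) (z := 1 / q) (hw x)
      (by rw [hpq.one_div_add_one_div]; norm_num), hpq.one_div_add_one_div, div_one, rpow_one]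
  have hw_meas := hw_int.aestronglyMeasurable.aemeasurable
  have hF : MemLp (fun x ↦ w x ^ (1 / p)) (ENNReal.ofReal p) μ := by
    rw [← integrable_norm_rpow_iff (hw_meas.pow_const _).aestronglyMeasurable
      (by simpa using hpq.pos) ENNReal.ofReal_ne_top, ENNReal.toReal_ofReal hpq.nonneg]
    simpa only [norm_of_nonneg (rpow_nonneg (hw _) _), hw_pow] using hw_int
  have hG : MemLp (fun x ↦ w x ^ (1 / q) * f x) (ENNReal.ofReal q) μ := by
    rw [← integrable_norm_rpow_iff (f := fun x ↦ w x ^ (1 / q) * f x)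
      ((hw_meas.pow_const _).mul hf_meas.aemeasurable).aestronglyMeasurable
      (by simpa using hpq.symm.pos) ENNReal.ofReal_ne_top, ENNReal.toReal_ofReal hpq.symm.nonneg]
    simpa only [norm_of_nonneg (mul_nonneg (rpow_nonneg (hw _) _) (hf _)), hwf_pow] using hwf_int
  have holder := integral_mul_le_Lp_mul_Lq_of_nonneg hpq
    (.of_forall fun x ↦ rpow_nonneg (hw x) _)
    (.of_forall fun x ↦ mul_nonneg (rpow_nonneg (hw x) _) (hf x)) hF hG
  simp only [← hsplit, hw_pow, hwf_pow] at holder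
  rwa [hp] at holder

theorem integral_abs_sub_half : ∫ t in (0 : ℝ)..1, |t - 1 / 2| = 1 / 4 := by
  have hcont : Continuous fun t : ℝ ↦ |t - 1 / 2| := by fun_prop
  rw [← integral_add_adjacent_intervals (b := 1 / 2)
    (hcont.intervalIntegrable _ _) (hcont.intervalIntegrable _ _),
    integral_congr (g := fun t ↦ 1 / 2 - t) (fun t ht ↦ by
      rw [uIcc_of_le (by norm_num)] at ht
      dsimp only
      rw [abs_of_nonpos (by linarith [ht.2])]
      ring),
    integral_congr (a := 1 / 2) (g := fun t ↦ t - 1 / 2) (fun t ht ↦ by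
      rw [uIcc_of_le (by norm_num)] at ht
      exact abs_of_nonneg (by linarith [ht.1]))]
  simp only [integral_sub intervalIntegrable_const intervalIntegrable_id,
    integral_sub intervalIntegrable_id intervalIntegrable_const, integral_id,
    intervalIntegral.integral_const, smul_eq_mul]
  norm_num

theorem integral_abs_sub_half_mul_le {q : ℝ} (hq : 1 ≤ q) {g : ℝ → ℝ} (hg : Continuous g)
    (hg0 : 0 ≤ g) :
    ∫ t in (0 : ℝ)..1, |t - 1 / 2| * g t
      ≤ (1 / 4) ^ (1 - 1 / q) * ((1 / 2) * ∫ t in (0 : ℝ)..1, g t ^ q) ^ (1 / q) := by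
  have hw : Continuous fun t : ℝ ↦ |t - 1 / 2| := by fun_prop
  have hgq : Continuous fun t ↦ g t ^ q := hg.rpow_const fun _ ↦ Or.inr (zero_le_one.trans hq)
  have hw_int := integral_abs_sub_half
  simp only [integral_of_le zero_le_one] at hw_int ⊢
  calc ∫ t in Ioc 0 1, |t - 1 / 2| * g t
      ≤ (∫ t in Ioc 0 1, |t - 1 / 2|) ^ (1 - 1 / q) *
          (∫ t in Ioc 0 1, |t - 1 / 2| * g t ^ q) ^ (1 / q) :=
        integral_mul_le_weight_mul_Lp_of_nonneg hq (fun _ ↦ abs_nonneg _) hg0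
          hw.integrableOn_Ioc hg.aestronglyMeasurable (hw.mul hgq).integrableOn_Ioc
    _ ≤ (1 / 4) ^ (1 - 1 / q) * ((1 / 2) * ∫ t in Ioc 0 1, g t ^ q) ^ (1 / q) := by
        rw [hw_int, ← MeasureTheory.integral_const_mul]
        have : 0 ≤ ∫ t in Ioc 0 1, |t - 1 / 2| * g t ^ q :=
          setIntegral_nonneg measurableSet_Ioc fun t _ ↦
            mul_nonneg (abs_nonneg _) (rpow_nonneg (hg0 t) q)
        gcongr with t ht
        · exact (hw.mul hgq).integrableOn_Ioc
        · exact (continuous_const.mul hgq).integrableOn_Ioc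
        · exact measurableSet_Ioc.nullMeasurableSet
        · exact rpow_nonneg (hg0 t) q
        · rw [abs_le]; constructor <;> linarith [ht.1, ht.2]

theorem trapezoid_sub_integral_eq_integral_mul_deriv {f f' : ℝ → ℝ}
    (hf : ∀ t ∈ uIcc (0 : ℝ) 1, HasDerivAt f (f' t) t) (hf' : IntervalIntegrable f' volume 0 1) :
    (f 0 + f 1) / 2 - ∫ t in (0 : ℝ)..1, f t = ∫ t in (0 : ℝ)..1, (t - 1 / 2) * f' t := by
  rw [integral_mul_deriv_eq_deriv_mul (u := fun t ↦ t - 1 / 2) (u' := fun _ ↦ 1)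
    (fun t _ ↦ (hasDerivAt_id t).sub_const _) hf intervalIntegrable_const hf']
  simp only [one_mul]
  ring

theorem integral_exp_affine_mul_eq_Lmean {x y c : ℝ} (hxy : x ≠ y) (hc : c ≠ 0) :
    ∫ t in (0 : ℝ)..1, exp ((x + (y - x) * t) * c) = Lmean (exp (x * c)) (exp (y * c)) := by
  have hyx : (y - x) * c ≠ 0 := mul_ne_zero (sub_ne_zero.2 hxy.symm) hc
  simp only [add_mul, mul_right_comm _ _ c]
  rw [integral_comp_add_mul (fun u ↦ exp u) hyx, integral_exp, Lmean, log_exp, log_exp,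
    smul_eq_mul, inv_mul_eq_div, ← sub_mul]
  ring_nf

theorem Amean_exp_sub_Lmean_exp {x y c : ℝ} (hxy : x ≠ y) (hc : c ≠ 0) :
    Amean (exp (x * c)) (exp (y * c)) - Lmean (exp (x * c)) (exp (y * c))
      = c * (y - x) * ∫ t in (0 : ℝ)..1, (t - 1 / 2) * exp ((x + (y - x) * t) * c) := by
  have hderiv : ∀ t, HasDerivAt (fun t ↦ exp ((x + (y - x) * t) * c))
      (exp ((x + (y - x) * t) * c) * (c * (y - x))) t := fun t ↦ by
    convert (((hasDerivAt_id' t).const_mul (y - x)).const_add x).mul_const c |>.exp using 1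
    ring
  have htrap := trapezoid_sub_integral_eq_integral_mul_deriv (fun t _ ↦ hderiv t)
    (Continuous.intervalIntegrable (by fun_prop) _ _)
  simp only [mul_zero, add_zero, mul_one, add_sub_cancel] at htrap
  rw [← integral_exp_affine_mul_eq_Lmean hxy hc, Amean, htrap,
    ← intervalIntegral.integral_const_mul]
  congr 1 with t
  ring

theorem exp_sub_exp_eq_mul_Lmean {x y : ℝ} (hxy : x ≠ y) :
    exp y - exp x = (y - x) * Lmean (exp x) (exp y) := by
  rw [Lmean, log_exp, log_exp, mul_div_cancel₀ _ (sub_ne_zero.2 hxy.symm)]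

theorem Lmean_exp_mem_Icc {x y : ℝ} (hxy : x < y) :
    Lmean (exp x) (exp y) ∈ Icc (exp x) (exp y) := by
  have hyx : 0 < y - x := sub_pos.2 hxy
  have hlow := add_one_le_exp (y - x)
  have hup := add_one_le_exp (x - y)
  rw [exp_sub] at hlow hup
  rw [Lmean, log_exp, log_exp, mem_Icc, le_div_iff₀ hyx, div_le_iff₀ hyx]
  constructor
  · have := mul_le_mul_of_nonneg_left hlow (exp_pos x).le
    rw [mul_div_cancel₀ _ (exp_pos x).ne'] at this
    linarith
  · have := mul_le_mul_of_nonneg_left hup (exp_pos y).le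
    rw [mul_div_cancel₀ _ (exp_pos y).ne'] at this
    linarith

theorem Gmean_exp_rpow (x y r : ℝ) : Gmean (exp x) (exp y) ^ (2 * r) = exp (r * (x + y)) := by
  rw [Gmean, ← exp_add, sqrt_eq_rpow, ← exp_mul, ← exp_mul]
  ring_nf

theorem exp_mul_le_exp_mul_exp_of_le {z u : ℝ} (s : ℝ) (hzu : z ≤ u) :
    exp (u * s) ≤ exp (-((s - 1) ^ 2 * z)) * exp (u * (s ^ 2 - s + 1)) := by
  rw [← exp_add, exp_le_exp]
  nlinarith [mul_nonneg (sq_nonneg (s - 1)) (sub_nonneg.2 hzu)]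

theorem abs_Amean_exp_sub_Lmean_exp_le {x y s q : ℝ} (hxy : x < y) (hy : y ≤ 0) (hs : 0 < s)
    (hq : 1 ≤ q) :
    |Amean (exp (x * s)) (exp (y * s)) - Lmean (exp (x * s)) (exp (y * s))|
      ≤ s * (y - x) * (exp (-((s - 1) ^ 2 * (x + y))) * ((1 / 4) ^ (1 - 1 / q) *
        ((1 / 2) * Lmean (exp (x * ((s ^ 2 - s + 1) * q))) (exp (y * ((s ^ 2 - s + 1) * q))))
          ^ (1 / q))) := by
  have hc : 0 < s ^ 2 - s + 1 := by nlinarith [sq_nonneg (s - 1 / 2)]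
  set c := s ^ 2 - s + 1
  set E := exp (-((s - 1) ^ 2 * (x + y)))
  have hcont : ∀ r, Continuous fun t ↦ |t - 1 / 2| * exp ((x + (y - x) * t) * r) :=
    fun r ↦ by fun_prop
  rw [Amean_exp_sub_Lmean_exp hxy.ne hs.ne', abs_mul, abs_of_pos (mul_pos hs (sub_pos.2 hxy))]
  gcongr
  calc |∫ t in (0 : ℝ)..1, (t - 1 / 2) * exp ((x + (y - x) * t) * s)|
      ≤ ∫ t in (0 : ℝ)..1, |t - 1 / 2| * exp ((x + (y - x) * t) * s) := by
        refine (abs_integral_le_integral_abs zero_le_one).trans_eq ?_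
        simp only [abs_mul, abs_exp]
    _ ≤ ∫ t in (0 : ℝ)..1, E * (|t - 1 / 2| * exp ((x + (y - x) * t) * c)) := by
        refine integral_mono_on zero_le_one ((hcont s).intervalIntegrable _ _)
          ((continuous_const.mul (hcont c)).intervalIntegrable _ _) fun t ht ↦ ?_
        rw [mul_left_comm]
        gcongr
        exact exp_mul_le_exp_mul_exp_of_le s (by nlinarith [ht.1, ht.2])
    _ ≤ E * ((1 / 4) ^ (1 - 1 / q) *
          ((1 / 2) * ∫ t in (0 : ℝ)..1, exp ((x + (y - x) * t) * c) ^ q) ^ (1 / q)) := by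
        rw [intervalIntegral.integral_const_mul]
        gcongr
        exact integral_abs_sub_half_mul_le hq (by fun_prop) fun t ↦ (exp_pos _).le
    _ = _ := by
        simp only [← exp_mul, mul_assoc]
        rw [← integral_exp_affine_mul_eq_Lmean hxy.ne (by positivity)]

theorem mul_quarter_rpow_mul_half_mul_rpow {ℓ Λ r : ℝ} (hℓ : 0 ≤ ℓ) (hΛ : 0 ≤ Λ) :
    ℓ * ((1 / 4) ^ (1 - r) * ((1 / 2) * Λ) ^ r) = (1 / 2) * ((ℓ / 2) ^ (1 - r) * (ℓ * Λ) ^ r) := by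
  have hsplit : ∀ z : ℝ, 0 ≤ z → z ^ (1 - r) * z ^ r = z := fun z hz ↦ by
    rw [← rpow_add' hz (by norm_num), sub_add_cancel, rpow_one]
  rw [show (1 : ℝ) / 4 = 1 / 2 * (1 / 2) by norm_num, div_eq_mul_one_div ℓ 2]
  simp only [mul_rpow, hℓ, hΛ, one_div_nonneg, zero_le_two]
  linear_combination (ℓ * (1 / 2 : ℝ) ^ (1 - r) * Λ ^ r) * hsplit (1 / 2) (by norm_num)
    - (1 / 2 * (1 / 2 : ℝ) ^ (1 - r) * Λ ^ r) * hsplit ℓ hℓ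

theorem stmt_18_general (a b s q : ℝ) (ha : 0 < a) (hab : a < b) (hb : b ≤ 1)
    (hs0 : 0 < s) (hq : 1 ≤ q) :
    |Amean (a ^ s) (b ^ s) - Lmean (a ^ s) (b ^ s)| ≤
      (s / (2 * Gmean a b ^ (2 * (s - 1) ^ 2))) *
        ((b - a) / (2 * Lmean a b)) ^ (1 - 1 / q) *
        (1 / ((s ^ 2 - s + 1) * q)) ^ (1 / q) *
        ((b ^ ((s ^ 2 - s + 1) * q)
            - Lmean (a ^ ((s ^ 2 - s + 1) * q)) (b ^ ((s ^ 2 - s + 1) * q))) ^ (1 / q)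
          + (Lmean (a ^ ((s ^ 2 - s + 1) * q)) (b ^ ((s ^ 2 - s + 1) * q))
            - a ^ ((s ^ 2 - s + 1) * q)) ^ (1 / q)) := by
  obtain ⟨x, rfl⟩ : ∃ x, exp x = a := ⟨log a, exp_log ha⟩
  obtain ⟨y, rfl⟩ : ∃ y, exp y = b := ⟨log b, exp_log (ha.trans hab)⟩
  have hxy : x < y := exp_lt_exp.1 hab
  have hℓ : 0 < y - x := sub_pos.2 hxy
  have hm : 0 < (s ^ 2 - s + 1) * q := by nlinarith [sq_nonneg (s - 1 / 2)]
  set m := (s ^ 2 - s + 1) * q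
  have hΛ := Lmean_exp_mem_Icc (mul_lt_mul_of_pos_right hxy hm)
  set Λ := Lmean (exp (x * m)) (exp (y * m))
  have hdiff : 1 / m * (exp (y * m) - exp (x * m)) = (y - x) * Λ := by
    rw [exp_sub_exp_eq_mul_Lmean (mul_lt_mul_of_pos_right hxy hm).ne, ← sub_mul,
      mul_comm (y - x) m, mul_assoc, one_div, inv_mul_cancel_left₀ hm.ne']
  have hratio : (exp y - exp x) / (2 * Lmean (exp x) (exp y)) = (y - x) / 2 := by
    rw [exp_sub_exp_eq_mul_Lmean hxy.ne]
    field_simp [((exp_pos x).trans_le (Lmean_exp_mem_Icc hxy).1).ne']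
  simp only [← exp_mul, Gmean_exp_rpow, hratio]
  calc _ ≤ s * (y - x) * (exp (-((s - 1) ^ 2 * (x + y))) * ((1 / 4) ^ (1 - 1 / q) *
          ((1 / 2) * Λ) ^ (1 / q))) :=
        abs_Amean_exp_sub_Lmean_exp_le hxy (exp_le_one_iff.1 hb) hs0 hq
    _ = s / (2 * exp ((s - 1) ^ 2 * (x + y))) * ((y - x) / 2) ^ (1 - 1 / q) *
          (1 / m) ^ (1 / q) * (exp (y * m) - exp (x * m)) ^ (1 / q) := by
        rw [mul_assoc _ ((1 / m) ^ (1 / q)), ← mul_rpow (by positivity)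
          (sub_nonneg.2 (hΛ.1.trans hΛ.2)), hdiff, exp_neg]
        linear_combination (exp ((s - 1) ^ 2 * (x + y)))⁻¹ * s *
          mul_quarter_rpow_mul_half_mul_rpow (r := 1 / q) hℓ.le ((exp_pos _).le.trans hΛ.1)
    _ ≤ _ := by
        gcongr
        rw [show exp (y * m) - exp (x * m) = (exp (y * m) - Λ) + (Λ - exp (x * m)) by ring]
        exact rpow_add_le_add_rpow (sub_nonneg.2 hΛ.2) (sub_nonneg.2 hΛ.1) (by positivity)
          (div_le_one_of_le₀ hq (by positivity))

theorem stmt_18 (a b s q : ℝ) (ha : 0 < a) (hab : a < b) (hb : b ≤ 1)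
    (hs0 : 0 < s) (hs1 : s < 1) (hq : 1 ≤ q) :
    |Amean (a ^ s) (b ^ s) - Lmean (a ^ s) (b ^ s)| ≤
      (s / (2 * Gmean a b ^ (2 * (s - 1) ^ 2))) *
        ((b - a) / (2 * Lmean a b)) ^ (1 - 1 / q) *
        (1 / ((s ^ 2 - s + 1) * q)) ^ (1 / q) *
        ((b ^ ((s ^ 2 - s + 1) * q)
            - Lmean (a ^ ((s ^ 2 - s + 1) * q)) (b ^ ((s ^ 2 - s + 1) * q))) ^ (1 / q)
          + (Lmean (a ^ ((s ^ 2 - s + 1) * q)) (b ^ ((s ^ 2 - s + 1) * q))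
            - a ^ ((s ^ 2 - s + 1) * q)) ^ (1 / q)) :=
  stmt_18_general a b s q ha hab hb hs0 hq
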